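/- arXiv:1901.07171 — 4 statements merged into one kernel-verified Lean document; each statement's English description precedes it below -/
import Mathlib

section
/- Let Ω be a region (nonempty open connected subset) of ℂ and let F : Ω → M_n(ℂ) be analytic. Suppose there is z₀ ∈ Ω such that ‖F(z)‖ ≤ ‖F(z₀)‖ for all z ∈ Ω, where ‖·‖ is the operator norm, and let x₀ ∈ ℂⁿ be a maximizing vector for F(z₀), i.e., ‖x₀‖ = 1 and ‖F(z₀)x₀‖ = ‖F(z₀)‖. Then F^{(k)}(z₀)x₀ = 0 for every k ≥ 1, and F(z)x₀ = F(z₀)x₀ for all z ∈ Ω. -/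
/-! For a unit vector `x₀`, the holomorphic map `z ↦ F z x₀` into the strictly convex space `ℂⁿ`
satisfies `‖F z x₀‖ ≤ ‖F z‖ ≤ ‖F z₀‖ = ‖F z₀ x₀‖`, so by the maximum modulus principle it is
constant on `Ω`. Its derivatives at `z₀`, namely `F⁽ᵏ⁾(z₀) x₀`, therefore vanish for `k ≥ 1`. -/

open scoped Matrix

/-- The Euclidean norm of a vector in `ℂⁿ`. -/
noncomputable def euclNorm {n : ℕ} (x : Fin n → ℂ) : ℝ :=
  Real.sqrt (∑ i, ‖x i‖ ^ 2)

/-- The operator norm of a complex `n × n` matrix induced by the Euclidean norm on `ℂⁿ`. -/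
noncomputable def opNorm {n : ℕ} (A : Matrix (Fin n) (Fin n) ℂ) : ℝ :=
  ‖(Matrix.toEuclideanCLM (𝕜 := ℂ) A : EuclideanSpace ℂ (Fin n) →L[ℂ] EuclideanSpace ℂ (Fin n))‖

/-- `sval A k` is the `(k+1)`-st singular value `s_{k+1}(A)` of `A`: the nonnegative square
roots of the eigenvalues of `Aᴴ * A`, listed in nonincreasing order.  In particular
`sval A 0 = s₁(A)` is the largest singular value (the operator norm) and
`sval A (n-1) = sₙ(A)` is the smallest. -/
noncomputable def sval {n : ℕ} (A : Matrix (Fin n) (Fin n) ℂ) (k : Fin n) : ℝ :=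
  let f : Fin n → ℝ := fun i =>
    Real.sqrt ((Matrix.isHermitian_conjTranspose_mul_self A).eigenvalues i)
  (f ∘ Tuple.sort f) k.rev

/-- The Frobenius (Hilbert--Schmidt) norm of a complex matrix: `‖T‖_F = (trace (Tᴴ T))^{1/2}`. -/
noncomputable def frobNorm {n : ℕ} (A : Matrix (Fin n) (Fin n) ℂ) : ℝ :=
  Real.sqrt ((Matrix.trace (Aᴴ * A)).re)

attribute [local instance] Matrix.normedAddCommGroup Matrix.normedSpace

open Filter Topology Set

theorem ContinuousLinearMap.iteratedDeriv_comp_left {𝕜 E F : Type*} [NontriviallyNormedField 𝕜]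
    [NormedAddCommGroup E] [NormedSpace 𝕜 E] [NormedAddCommGroup F] [NormedSpace 𝕜 F]
    (L : E →L[𝕜] F) {f : 𝕜 → E} {x : 𝕜} {k : ℕ} (hf : ContDiffAt 𝕜 k f x) :
    iteratedDeriv k (L ∘ f) x = L (iteratedDeriv k f x) := by
  simp only [iteratedDeriv_eq_iteratedFDeriv, L.iteratedFDeriv_comp_left hf le_rfl]
  rfl

theorem iteratedDeriv_eq_zero_of_eventuallyEq_const {𝕜 F : Type*} [NontriviallyNormedField 𝕜]
    [NormedAddCommGroup F] [NormedSpace 𝕜 F] {f : 𝕜 → F} {x : 𝕜} {c : F}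
    (h : f =ᶠ[𝓝 x] fun _ => c) {k : ℕ} (hk : k ≠ 0) : iteratedDeriv k f x = 0 := by
  rw [h.iteratedDeriv_eq, iteratedDeriv_const, if_neg hk]

noncomputable def Matrix.mulVecEuclCLM {𝕜 m n : Type*} [RCLike 𝕜] [Fintype m] [Fintype n]
    (x : n → 𝕜) : Matrix m n 𝕜 →L[𝕜] EuclideanSpace 𝕜 m :=
  LinearMap.toContinuousLinearMap
    ((WithLp.linearEquiv 2 𝕜 (m → 𝕜)).symm.toLinearMap ∘ₗ (Matrix.mulVecBilin 𝕜 𝕜).flip x)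

@[simp]
theorem Matrix.mulVecEuclCLM_apply {𝕜 m n : Type*} [RCLike 𝕜] [Fintype m] [Fintype n]
    (x : n → 𝕜) (A : Matrix m n 𝕜) : Matrix.mulVecEuclCLM x A = WithLp.toLp 2 (A *ᵥ x) :=
  rfl

theorem norm_toLp_eq_euclNorm {n : ℕ} (x : Fin n → ℂ) : ‖WithLp.toLp 2 x‖ = euclNorm x := by
  rw [EuclideanSpace.norm_eq]
  rfl

theorem euclNorm_mulVec_le {n : ℕ} (A : Matrix (Fin n) (Fin n) ℂ) (x : Fin n → ℂ) :
    euclNorm (A *ᵥ x) ≤ opNorm A * euclNorm x := by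
  rw [← norm_toLp_eq_euclNorm, ← norm_toLp_eq_euclNorm, ← Matrix.toEuclideanCLM_toLp]
  exact ContinuousLinearMap.le_opNorm _ _

theorem mulVec_eqOn_of_isMaxOn_opNorm {n : ℕ} {Ω : Set ℂ} (hΩ : IsOpen Ω)
    (hconn : IsPreconnected Ω) {F : ℂ → Matrix (Fin n) (Fin n) ℂ}
    (hF : DifferentiableOn ℂ F Ω) {z₀ : ℂ} (hz₀ : z₀ ∈ Ω)
    (hmax : ∀ z ∈ Ω, opNorm (F z) ≤ opNorm (F z₀))
    {x₀ : Fin n → ℂ} (hx₀ : euclNorm x₀ ≤ 1)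
    (hmv : euclNorm (F z₀ *ᵥ x₀) = opNorm (F z₀)) :
    EqOn (fun z => F z *ᵥ x₀) (fun _ => F z₀ *ᵥ x₀) Ω := by
  set L := Matrix.mulVecEuclCLM (m := Fin n) x₀
  have hLmax : IsMaxOn (norm ∘ L ∘ F) Ω z₀ := fun z hz => by
    simp only [Function.comp_apply, L, Matrix.mulVecEuclCLM_apply,
      norm_toLp_eq_euclNorm, hmv]
    calc euclNorm (F z *ᵥ x₀) ≤ opNorm (F z) * euclNorm x₀ := euclNorm_mulVec_le _ _
      _ ≤ opNorm (F z) := mul_le_of_le_one_right (norm_nonneg _) hx₀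
      _ ≤ opNorm (F z₀) := hmax z hz
  exact fun z hz => WithLp.toLp_injective 2 <|
    Complex.eqOn_of_isPreconnected_of_isMaxOn_norm hconn hΩ
      (L.differentiable.comp_differentiableOn hF) hz₀ hLmax hz

/-- **Maximum Operator Norm Principle.** If `F` is analytic on a region `Ω`, its operator norm
attains its maximum at `z₀ ∈ Ω`, and `x₀` is a maximizing vector for `F z₀`, then
`F⁽ᵏ⁾(z₀) x₀ = 0` for all `k ≥ 1` and `F z x₀ = F z₀ x₀` for all `z ∈ Ω`. -/
theorem maximum_operator_norm_principle {n : ℕ} (Ω : Set ℂ) (hΩ : IsOpen Ω)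
    (hconn : IsConnected Ω) (F : ℂ → Matrix (Fin n) (Fin n) ℂ)
    (hF : ∀ z ∈ Ω, DifferentiableAt ℂ F z) (z₀ : ℂ) (hz₀ : z₀ ∈ Ω)
    (hmax : ∀ z ∈ Ω, opNorm (F z) ≤ opNorm (F z₀))
    (x₀ : Fin n → ℂ) (hx₀ : euclNorm x₀ = 1)
    (hmv : euclNorm ((F z₀).mulVec x₀) = opNorm (F z₀)) :
    (∀ k : ℕ, 1 ≤ k → (iteratedDeriv k F z₀).mulVec x₀ = 0) ∧
      ∀ z ∈ Ω, (F z).mulVec x₀ = (F z₀).mulVec x₀ := by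
  have hFΩ : DifferentiableOn ℂ F Ω := fun z hz => (hF z hz).differentiableWithinAt
  have hconst := mulVec_eqOn_of_isMaxOn_opNorm hΩ hconn.isPreconnected hFΩ hz₀ hmax hx₀.le hmv
  refine ⟨fun k hk => ?_, hconst⟩
  set L := Matrix.mulVecEuclCLM (m := Fin n) x₀
  have hLF : L ∘ F =ᶠ[𝓝 z₀] fun _ => L (F z₀) :=
    eventually_of_mem (hΩ.mem_nhds hz₀) fun z hz => congrArg (WithLp.toLp 2) (hconst hz)
  have hFan : ContDiffAt ℂ k F z₀ := (hFΩ.analyticAt (hΩ.mem_nhds hz₀)).contDiffAt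
  have hderiv : L (iteratedDeriv k F z₀) = 0 :=
    (L.iteratedDeriv_comp_left hFan).symm.trans
      (iteratedDeriv_eq_zero_of_eventuallyEq_const hLF (by omega))
  simpa [L] using hderiv
end

section
/- Let Ω be a region (nonempty open connected subset) of ℂ with n ≥ 2, and let F : Ω → M_n(ℂ) be analytic. If there is z₀ ∈ Ω such that ‖F(z)‖ ≤ ‖F(z₀)‖ for all z ∈ Ω, where ‖·‖ is the operator norm, then there exist constant n×n unitary matrices U and V and an analytic function G : Ω → M_{n-1}(ℂ) such that for every z ∈ Ω, F(z) = U · [[‖F(z₀)‖, 0], [0, G(z)]] · V, where the middle factor is the block-diagonal matrix with (1,1) scalar block ‖F(z₀)‖ and lower-right (n−1)×(n−1) block G(z). -/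
/-!
Let `c = ‖F z₀‖` and choose unit vectors `u`, `v` with `⟪u, F z₀ v⟫ = c`. The holomorphic function
`z ↦ ⟪u, F z v⟫` is bounded by `c` on `Ω` and equals `c` at `z₀`, so by the maximum modulus
principle it is constantly `c`. As `‖F z‖ ≤ c`, the equality case of Cauchy–Schwarz then forces
`F z v = c u` and `(F z)ᴴ u = c v` for every `z ∈ Ω`. Hence, in orthonormal bases starting with `u`
and `v`, the matrix of `F z` has first row and first column `(c, 0, …, 0)`.
-/

open scoped Matrix

attribute [local instance] Matrix.normedAddCommGroup Matrix.normedSpace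

open scoped InnerProductSpace

section NormedSpace

variable {𝕜 E F : Type*} [RCLike 𝕜] [NormedAddCommGroup E] [NormedSpace 𝕜 E]
  [NormedAddCommGroup F] [NormedSpace 𝕜 F]

theorem exists_norm_eq_one_and_eq_norm_smul [Nontrivial F] (y : F) :
    ∃ u : F, ‖u‖ = 1 ∧ y = (‖y‖ : 𝕜) • u := by
  rcases eq_or_ne y 0 with rfl | hy
  · obtain ⟨u, hu⟩ := NormedSpace.sphere_nonempty_rclike 𝕜 (E := F) zero_le_one
    exact ⟨u, mem_sphere_zero_iff_norm.mp hu, by simp⟩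
  · refine ⟨(‖y‖⁻¹ : 𝕜) • y, norm_smul_inv_norm hy, ?_⟩
    rw [smul_smul, mul_inv_cancel₀ (by exact_mod_cast norm_ne_zero_iff.mpr hy), one_smul]

theorem ContinuousLinearMap.exists_norm_eq_one_norm_apply_eq_opNorm [ProperSpace E]
    [Nontrivial E] (T : E →L[𝕜] F) : ∃ v : E, ‖v‖ = 1 ∧ ‖T v‖ = ‖T‖ := by
  obtain ⟨v, hv, hmax⟩ := ((isCompact_sphere (0 : E) 1).image T.continuous.norm).sSup_mem
    ((Set.nonempty_coe_sort.mp (NormedSpace.sphere_nonempty_rclike 𝕜 zero_le_one)).image _)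
  exact ⟨v, mem_sphere_zero_iff_norm.mp hv, hmax.trans T.sSup_sphere_eq_norm⟩

end NormedSpace

section InnerProductSpace

variable {𝕜 E F : Type*} [RCLike 𝕜] [NormedAddCommGroup E] [InnerProductSpace 𝕜 E]
  [NormedAddCommGroup F] [InnerProductSpace 𝕜 F]

theorem eq_smul_of_inner_eq_of_norm_le {u y : E} {c : ℝ} (hu : ‖u‖ = 1)
    (hin : ⟪u, y⟫_𝕜 = c) (hy : ‖y‖ ≤ c) : y = (c : 𝕜) • u := by
  have hc : 0 ≤ c := (norm_nonneg y).trans hy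
  have hre : RCLike.re ⟪y, u⟫_𝕜 = c := by
    rw [← inner_conj_symm, hin, RCLike.conj_ofReal, RCLike.ofReal_re]
  have hsq : ‖y - (c : 𝕜) • u‖ ^ 2 ≤ 0 := by
    -- `‖y - c • u‖² = ‖y‖² - 2c² + c²`
    rw [@norm_sub_sq 𝕜, inner_smul_right, RCLike.re_ofReal_mul, hre, norm_smul,
      RCLike.norm_ofReal, hu, abs_of_nonneg hc]
    nlinarith [norm_nonneg y]
  exact sub_eq_zero.mp (norm_eq_zero.mp (by nlinarith [norm_nonneg (y - (c : 𝕜) • u)]))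

theorem OrthonormalBasis.exists_apply_eq [FiniteDimensional 𝕜 E] {ι : Type*} [Fintype ι]
    (hcard : Module.finrank 𝕜 E = Fintype.card ι) {u : E} (hu : ‖u‖ = 1) (i₀ : ι) :
    ∃ b : OrthonormalBasis ι 𝕜 E, b i₀ = u := by
  obtain ⟨b, hb⟩ := Orthonormal.exists_orthonormalBasis_extension_of_card_eq hcard
    (v := fun _ => u) (s := {i₀}) (orthonormal_subsingleton_iff.mpr fun _ => hu)
  exact ⟨b, hb i₀ rfl⟩

namespace ContinuousLinearMap

theorem exists_inner_apply_eq_opNorm [ProperSpace E] [Nontrivial E] [Nontrivial F]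
    (T : E →L[𝕜] F) : ∃ u v, ‖u‖ = 1 ∧ ‖v‖ = 1 ∧ ⟪u, T v⟫_𝕜 = ‖T‖ := by
  obtain ⟨v, hv, hTv⟩ := T.exists_norm_eq_one_norm_apply_eq_opNorm
  obtain ⟨u, hu, hTvu⟩ := exists_norm_eq_one_and_eq_norm_smul (𝕜 := 𝕜) (T v)
  refine ⟨u, v, hu, hv, ?_⟩
  rw [hTvu, inner_smul_right, inner_self_eq_norm_sq_to_K, hu, hTv]
  simp

theorem apply_eq_smul_of_inner_apply_eq {T : E →L[𝕜] F} {c : ℝ} (hT : ‖T‖ ≤ c) {u : F} {v : E}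
    (hu : ‖u‖ = 1) (hv : ‖v‖ = 1) (huv : ⟪u, T v⟫_𝕜 = c) : T v = (c : 𝕜) • u :=
  eq_smul_of_inner_eq_of_norm_le hu huv (T.le_opNorm_of_le hv.le |>.trans (by simpa using hT))

theorem inner_apply_eq_of_inner_apply_eq [CompleteSpace E] [CompleteSpace F] {T : E →L[𝕜] F}
    {c : ℝ} (hT : ‖T‖ ≤ c) {u : F} {v : E} (hu : ‖u‖ = 1) (hv : ‖v‖ = 1)
    (huv : ⟪u, T v⟫_𝕜 = c) (w : E) : ⟪u, T w⟫_𝕜 = c * ⟪v, w⟫_𝕜 := by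
  have hadj : adjoint T u = (c : 𝕜) • v := by
    refine (adjoint T).apply_eq_smul_of_inner_apply_eq (by rwa [LinearIsometryEquiv.norm_map])
      hv hu ?_
    rw [adjoint_inner_right, ← inner_conj_symm, huv, RCLike.conj_ofReal]
  rw [← adjoint_inner_left, hadj, inner_smul_left, RCLike.conj_ofReal]

end ContinuousLinearMap

end InnerProductSpace

theorem LinearMap.differentiableAt_comp {𝕜 E F G : Type*} [NontriviallyNormedField 𝕜]
    [CompleteSpace 𝕜] [NormedAddCommGroup E] [NormedSpace 𝕜 E] [FiniteDimensional 𝕜 E]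
    [NormedAddCommGroup F] [NormedSpace 𝕜 F] [NormedAddCommGroup G] [NormedSpace 𝕜 G]
    (L : E →ₗ[𝕜] F) {f : G → E} {x : G} (hf : DifferentiableAt 𝕜 f x) :
    DifferentiableAt 𝕜 (fun y => L (f y)) x :=
  L.toContinuousLinearMap.differentiableAt.comp x hf

theorem inner_apply_eqOn_of_forall_opNorm_le {E F : Type*} [NormedAddCommGroup E]
    [InnerProductSpace ℂ E] [NormedAddCommGroup F] [InnerProductSpace ℂ F]
    {T : ℂ → E →L[ℂ] F} {Ω : Set ℂ} (hT : DifferentiableOn ℂ T Ω) (hΩ : IsOpen Ω)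
    (hconn : IsPreconnected Ω) {z₀ : ℂ} (hz₀ : z₀ ∈ Ω) (hmax : ∀ z ∈ Ω, ‖T z‖ ≤ ‖T z₀‖)
    {u : F} {v : E} (hu : ‖u‖ = 1) (hv : ‖v‖ = 1) (huv : ⟪u, T z₀ v⟫_ℂ = ‖T z₀‖) :
    ∀ z ∈ Ω, ⟪u, T z v⟫_ℂ = ‖T z₀‖ := by
  have hdiff : DifferentiableOn ℂ (fun z => ⟪u, T z v⟫_ℂ) Ω := fun z hz =>
    (innerSL ℂ u).differentiableAt.comp_differentiableWithinAt z
      ((hT z hz).clm_apply (differentiableWithinAt_const v))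
  have hmaxOn : IsMaxOn (norm ∘ fun z => ⟪u, T z v⟫_ℂ) Ω z₀ := fun z hz => by
    simp only [Function.comp_apply, huv, Complex.norm_real, norm_norm]
    calc ‖⟪u, T z v⟫_ℂ‖ ≤ ‖u‖ * ‖T z v‖ := norm_inner_le_norm _ _
      _ ≤ ‖T z‖ := by simpa [hu] using (T z).le_opNorm_of_le hv.le
      _ ≤ ‖T z₀‖ := hmax z hz
  intro z hz
  exact (Complex.eqOn_of_isPreconnected_of_isMaxOn_norm hconn hΩ hdiff hz₀ hmaxOn hz).trans huv

theorem DifferentiableAt.matrix_submatrix {𝕜 E R : Type*} [NontriviallyNormedField 𝕜]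
    [NormedAddCommGroup E] [NormedSpace 𝕜 E] [NormedAddCommGroup R] [NormedSpace 𝕜 R]
    {l m n o : Type*} [Fintype l] [Fintype m] [Fintype n] [Fintype o]
    {A : E → Matrix m n R} {x : E} (hA : DifferentiableAt 𝕜 A x) (r : l → m) (c : o → n) :
    DifferentiableAt 𝕜 (fun y => (A y).submatrix r c) x :=
  differentiableAt_pi.2 fun i => differentiableAt_pi.2 fun j =>
    differentiableAt_pi.1 (differentiableAt_pi.1 hA (r i)) (c j)

namespace Matrix

theorem eq_reindex_fromBlocks_of_row_col {R : Type*} [Zero R] {m : ℕ}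
    (M : Matrix (Fin (1 + m)) (Fin (1 + m)) R) (a : R) (hrow : M 0 = Pi.single 0 a)
    (hcol : Mᵀ 0 = Pi.single 0 a) :
    M = reindex finSumFinEquiv finSumFinEquiv (fromBlocks (diagonal fun _ : Fin 1 => a) 0 0
      (M.submatrix (Fin.natAdd 1) (Fin.natAdd 1))) := by
  have hinl : Fin.castAdd m (0 : Fin 1) = 0 := Fin.ext (Nat.zero_mod _).symm
  have hinr : ∀ i : Fin m, Fin.natAdd 1 i ≠ 0 := fun i h => by simp [Fin.ext_iff] at h
  ext i j
  obtain ⟨i, rfl⟩ := finSumFinEquiv.surjective i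
  obtain ⟨j, rfl⟩ := finSumFinEquiv.surjective j
  rw [reindex_apply, submatrix_apply, Equiv.symm_apply_apply, Equiv.symm_apply_apply]
  rcases i with i | i <;> rcases j with j | j <;>
    simp only [Subsingleton.elim (α := Fin 1) _ 0, finSumFinEquiv_apply_left,
      finSumFinEquiv_apply_right, hinl, fromBlocks_apply₁₁, fromBlocks_apply₁₂,
      fromBlocks_apply₂₁, fromBlocks_apply₂₂, diagonal_apply_eq, zero_apply, submatrix_apply]
  · simpa using congrFun hrow 0
  · simpa [hinr] using congrFun hrow (Fin.natAdd 1 j)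
  · simpa [hinr] using congrFun hcol (Fin.natAdd 1 i)

theorem conjTranspose_basisFun_toMatrix_mul_mul_apply {𝕜 n : Type*} [RCLike 𝕜] [Fintype n]
    [DecidableEq n] (b d : OrthonormalBasis n 𝕜 (EuclideanSpace 𝕜 n)) (A : Matrix n n 𝕜)
    (i j : n) :
    (((EuclideanSpace.basisFun n 𝕜).toBasis.toMatrix b)ᴴ * A *
      (EuclideanSpace.basisFun n 𝕜).toBasis.toMatrix d) i j =
      ⟪b i, toEuclideanCLM (n := n) (𝕜 := 𝕜) A (d j)⟫_𝕜 := by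
  have hcol : ∀ (e : OrthonormalBasis n 𝕜 (EuclideanSpace 𝕜 n)) k,
      ((EuclideanSpace.basisFun n 𝕜).toBasis.toMatrix e)ᵀ k = (e k).ofLp := fun e k => by
    ext l; simp [Module.Basis.toMatrix_apply]
  have hrow : ((EuclideanSpace.basisFun n 𝕜).toBasis.toMatrix b)ᴴ i = star (b i).ofLp := by
    rw [← hcol]; rfl
  rw [mul_mul_apply, hrow, hcol, EuclideanSpace.inner_eq_star_dotProduct, dotProduct_comm]
  rfl

theorem eq_reindex_fromBlocks_of_inner {𝕜 E : Type*} [RCLike 𝕜] [NormedAddCommGroup E]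
    [InnerProductSpace 𝕜 E] {m : ℕ} {M : Matrix (Fin (1 + m)) (Fin (1 + m)) 𝕜}
    {b d : OrthonormalBasis (Fin (1 + m)) 𝕜 E} {T : E →L[𝕜] E}
    (hM : ∀ i j, M i j = ⟪b i, T (d j)⟫_𝕜) {c : ℝ} (hcol : T (d 0) = (c : 𝕜) • b 0)
    (hrow : ∀ w, ⟪b 0, T w⟫_𝕜 = c * ⟪d 0, w⟫_𝕜) :
    M = reindex finSumFinEquiv finSumFinEquiv (fromBlocks (diagonal fun _ : Fin 1 => (c : 𝕜)) 0 0
      (M.submatrix (Fin.natAdd 1) (Fin.natAdd 1))) := by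
  refine eq_reindex_fromBlocks_of_row_col M _ (funext fun j => ?_) (funext fun i => ?_)
  · rw [hM, hrow, OrthonormalBasis.inner_eq_ite]
    simp [Pi.single_apply, eq_comm]
  · rw [transpose_apply, hM, hcol, inner_smul_right, OrthonormalBasis.inner_eq_ite]
    simp [Pi.single_apply]

end Matrix

theorem maximum_operator_norm_factorization_general {m : ℕ}
    (Ω : Set ℂ) (hΩ : IsOpen Ω) (hconn : IsConnected Ω)
    (F : ℂ → Matrix (Fin (1 + m)) (Fin (1 + m)) ℂ)
    (hF : ∀ z ∈ Ω, DifferentiableAt ℂ F z) (z₀ : ℂ) (hz₀ : z₀ ∈ Ω)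
    (hmax : ∀ z ∈ Ω, opNorm (F z) ≤ opNorm (F z₀)) :
    ∃ U V : Matrix (Fin (1 + m)) (Fin (1 + m)) ℂ,
      Uᴴ * U = 1 ∧ U * Uᴴ = 1 ∧ Vᴴ * V = 1 ∧ V * Vᴴ = 1 ∧
      ∃ G : ℂ → Matrix (Fin m) (Fin m) ℂ, (∀ z ∈ Ω, DifferentiableAt ℂ G z) ∧
        ∀ z ∈ Ω,
          F z = U * (Matrix.reindex finSumFinEquiv finSumFinEquiv
            (Matrix.fromBlocks (Matrix.diagonal fun _ : Fin 1 => (opNorm (F z₀) : ℂ))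
              0 0 (G z))) * V := by
  set T : ℂ → _ := fun z => Matrix.toEuclideanCLM (n := Fin (1 + m)) (𝕜 := ℂ) (F z)
  have hT : DifferentiableOn ℂ T Ω := fun z hz =>
    (Matrix.toEuclideanCLM (n := Fin (1 + m)) (𝕜 := ℂ)).toAlgEquiv.toLinearMap
      |>.differentiableAt_comp (hF z hz) |>.differentiableWithinAt
  obtain ⟨u, v, hu, hv, huv⟩ := (T z₀).exists_inner_apply_eq_opNorm
  have hφ := inner_apply_eqOn_of_forall_opNorm_le hT hΩ hconn.isPreconnected hz₀ hmax hu hv huv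
  have hcard : Module.finrank ℂ (EuclideanSpace ℂ (Fin (1 + m))) = Fintype.card (Fin (1 + m)) :=
    finrank_euclideanSpace
  obtain ⟨b, rfl⟩ := OrthonormalBasis.exists_apply_eq hcard hu 0
  obtain ⟨d, rfl⟩ := OrthonormalBasis.exists_apply_eq hcard hv 0
  set U := (EuclideanSpace.basisFun (Fin (1 + m)) ℂ).toBasis.toMatrix b
  set W := (EuclideanSpace.basisFun (Fin (1 + m)) ℂ).toBasis.toMatrix d
  have hU : U * Uᴴ = 1 := by simp [U]
  have hW : W * Wᴴ = 1 := by simp [W]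
  set M := fun z => Uᴴ * F z * W
  have hM : ∀ z i j, M z i j = ⟪b i, T z (d j)⟫_ℂ := fun z =>
    Matrix.conjTranspose_basisFun_toMatrix_mul_mul_apply b d (F z)
  refine ⟨U, Wᴴ, by simp [U], hU, by simpa using hW, by simp [W],
    fun z => (M z).submatrix (Fin.natAdd 1) (Fin.natAdd 1), fun z hz => ?_, fun z hz => ?_⟩
  · exact (((LinearMap.mulRight ℂ W).comp (LinearMap.mulLeft ℂ Uᴴ)).differentiableAt_comp
      (hF z hz)).matrix_submatrix _ _
  · calc F z = (U * Uᴴ) * F z * (W * Wᴴ) := by rw [hU, hW, Matrix.one_mul, Matrix.mul_one]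
      _ = U * M z * Wᴴ := by simp only [M, Matrix.mul_assoc]
      _ = _ := by
        congr 2
        exact Matrix.eq_reindex_fromBlocks_of_inner (hM z)
          ((T z).apply_eq_smul_of_inner_apply_eq (hmax z hz) hu hv (hφ z hz))
          ((T z).inner_apply_eq_of_inner_apply_eq (hmax z hz) hu hv (hφ z hz))

/-- If `F : Ω → Mₙ(ℂ)` (here `n = 1 + m` with `m ≥ 1`, so `n ≥ 2`) is analytic on a region `Ω`
and its operator norm attains its maximum at `z₀ ∈ Ω`, then there are constant unitary matrices
`U`, `V` and an analytic `G : Ω → M_{n-1}(ℂ)` with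
`F z = U * [[‖F z₀‖, 0], [0, G z]] * V` on `Ω`. -/
theorem maximum_operator_norm_factorization {m : ℕ} (hm : 1 ≤ m)
    (Ω : Set ℂ) (hΩ : IsOpen Ω) (hconn : IsConnected Ω)
    (F : ℂ → Matrix (Fin (1 + m)) (Fin (1 + m)) ℂ)
    (hF : ∀ z ∈ Ω, DifferentiableAt ℂ F z) (z₀ : ℂ) (hz₀ : z₀ ∈ Ω)
    (hmax : ∀ z ∈ Ω, opNorm (F z) ≤ opNorm (F z₀)) :
    ∃ U V : Matrix (Fin (1 + m)) (Fin (1 + m)) ℂ,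
      Uᴴ * U = 1 ∧ U * Uᴴ = 1 ∧ Vᴴ * V = 1 ∧ V * Vᴴ = 1 ∧
      ∃ G : ℂ → Matrix (Fin m) (Fin m) ℂ, (∀ z ∈ Ω, DifferentiableAt ℂ G z) ∧
        ∀ z ∈ Ω,
          F z = U * (Matrix.reindex finSumFinEquiv finSumFinEquiv
            (Matrix.fromBlocks (Matrix.diagonal fun _ : Fin 1 => (opNorm (F z₀) : ℂ))
              0 0 (G z))) * V :=
  maximum_operator_norm_factorization_general Ω hΩ hconn F hF z₀ hz₀ hmax
end

section
/- Let Ω be a region (nonempty open connected subset) of ℂ and let F : Ω → M_n(ℂ) be analytic. The following are equivalent: (1) F is constant on Ω; (2) for every k = 1, …, n, the function z ↦ s_k(F(z)) is constant on Ω; (3) for every k = 1, …, n, the function z ↦ s_k(F(z)) attains its maximum value at some point z_k ∈ Ω; (4) the Frobenius norm ‖F(z)‖_F is constant on Ω; (5) the Frobenius norm ‖F(z)‖_F attains its maximum value at some z₀ ∈ Ω. -/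
/-
(1) ⇒ (2) ⇒ (3) and (2) ⇒ (4) ⇒ (5) are immediate, the second chain because
`‖A‖_F² = ∑ₖ sₖ(A)²`. For (5) ⇒ (1): the Frobenius norm is the Euclidean norm of the vector of
entries of `F z`, and a holomorphic map into a strictly convex space whose norm has an interior
maximum is constant.

For (3) ⇒ (2) use the Ky Fan norms `‖A‖₍ₖ₎ = s₁(A) + ⋯ + sₖ(A)`, which are the maxima of
`|∑ᵢ ⟪xᵢ, A yᵢ⟫|` over pairs of orthonormal `k`-frames. Once `s₁, …, sₖ₋₁` are known to be
constant on `Ω`, `‖F z‖₍ₖ₎` is maximal wherever `sₖ(F z)` is. For frames optimal at such a point,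
the holomorphic function `z ↦ ∑ᵢ ⟪xᵢ, F(z) yᵢ⟫` has modulus at most `‖F z‖₍ₖ₎`, with equality there;
by the maximum modulus principle its modulus is constant, which pins `‖F z‖₍ₖ₎`, hence `sₖ(F z)`.
The Ky Fan bound itself comes from a singular value decomposition `A vⱼ = sⱼ uⱼ`: expanding
`∑ᵢ ⟪xᵢ, A yᵢ⟫` and applying AM-GM bounds it by `∑ⱼ sⱼ cⱼ` with weights `0 ≤ cⱼ ≤ 1` of total at
most `k`, and such a weighted sum is at most the sum of the `k` largest `sⱼ`.
-/

open scoped Matrix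

attribute [local instance] Matrix.normedAddCommGroup Matrix.normedSpace

open Finset Module Matrix
open scoped InnerProductSpace

theorem sum_mul_le_sum_of_threshold {ι : Type*} [Fintype ι] (g t : ι → ℝ) (s : Finset ι)
    {c : ℝ} (hc : 0 ≤ c) (hs : ∀ i ∈ s, c ≤ g i) (hsc : ∀ i ∉ s, g i ≤ c)
    (ht₀ : ∀ i, 0 ≤ t i) (ht₁ : ∀ i, t i ≤ 1) (hsum : ∑ i, t i ≤ #s) :
    ∑ i, g i * t i ≤ ∑ i ∈ s, g i := by
  classical
  have key : ∀ i, (g i - c) * (t i - if i ∈ s then 1 else 0) ≤ 0 := fun i => by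
    split_ifs with hi
    · exact mul_nonpos_of_nonneg_of_nonpos (by linarith [hs i hi]) (by linarith [ht₁ i])
    · exact mul_nonpos_of_nonpos_of_nonneg (by linarith [hsc i hi]) (by linarith [ht₀ i])
  have hkey_sum := sum_nonpos fun i (_ : i ∈ univ) => key i
  simp only [sub_mul, mul_sub, mul_ite, mul_one, mul_zero, sum_sub_distrib, ← sum_filter,
    filter_mem_eq_inter, univ_inter, ← mul_sum, sum_const, nsmul_eq_mul] at hkey_sum
  nlinarith

section InnerProductSpace

variable {𝕜 E F : Type*} [RCLike 𝕜] [NormedAddCommGroup E] [InnerProductSpace 𝕜 E]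
  [NormedAddCommGroup F] [InnerProductSpace 𝕜 F]

theorem exists_orthonormalBasis_norm_smul_eq [FiniteDimensional 𝕜 F] {ι : Type*} [Fintype ι]
    (hcard : finrank 𝕜 F = Fintype.card ι) {f : ι → F}
    (hf : Pairwise fun i j => ⟪f i, f j⟫_𝕜 = 0) :
    ∃ U : OrthonormalBasis ι 𝕜 F, ∀ i, f i = (‖f i‖ : 𝕜) • U i := by
  set s : Set ι := {i | f i ≠ 0}
  have hv : Orthonormal 𝕜 (s.domRestrict fun i => (‖f i‖ : 𝕜)⁻¹ • f i) := by
    refine ⟨fun i => ?_, fun i j hij => ?_⟩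
    · simp [norm_smul, inv_mul_cancel₀ (norm_ne_zero_iff.mpr i.2)]
    · simp [inner_smul_left, inner_smul_right, hf (Subtype.coe_ne_coe.mpr hij)]
  obtain ⟨U, hU⟩ := hv.exists_orthonormalBasis_extension_of_card_eq hcard
  refine ⟨U, fun i => ?_⟩
  by_cases hi : f i = 0
  · simp [hi]
  · rw [hU i hi, smul_smul, mul_inv_cancel₀ (by simpa using hi), one_smul]

theorem Orthonormal.sum_sq_norm_inner_le_one {ι : Type*} [Fintype ι] {y : ι → E}
    (hy : Orthonormal 𝕜 y) {v : E} (hv : ‖v‖ = 1) : ∑ i, ‖⟪v, y i⟫_𝕜‖ ^ 2 ≤ 1 := by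
  simpa [norm_inner_symm, hv] using hy.sum_inner_products_le (s := univ) v

theorem Orthonormal.sum_sum_sq_norm_inner_le_card {ι κ : Type*} [Fintype ι] [Fintype κ]
    {e : ι → E} {y : κ → E} (he : Orthonormal 𝕜 e) (hy : Orthonormal 𝕜 y) :
    ∑ j, ∑ i, ‖⟪e j, y i⟫_𝕜‖ ^ 2 ≤ Fintype.card κ := by
  rw [sum_comm, Fintype.card_eq_sum_ones, Nat.cast_sum, Nat.cast_one]
  exact sum_le_sum fun i _ => by simpa [hy.1 i] using he.sum_inner_products_le (s := univ) (y i)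

theorem norm_sum_inner_apply_le {ι κ : Type*} [Fintype ι] [Fintype κ] (T : E →ₗ[𝕜] F)
    (V : OrthonormalBasis ι 𝕜 E) (U : ι → F) {σ : ι → ℝ} (hσ : ∀ j, 0 ≤ σ j)
    (hT : ∀ j, T (V j) = (σ j : 𝕜) • U j) (x : κ → F) (y : κ → E) :
    ‖∑ i, ⟪x i, T (y i)⟫_𝕜‖ ≤
      ∑ j, σ j * ((∑ i, ‖⟪V j, y i⟫_𝕜‖ ^ 2 + ∑ i, ‖⟪U j, x i⟫_𝕜‖ ^ 2) / 2) := by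
  have hexpand : ∀ i, ⟪x i, T (y i)⟫_𝕜 = ∑ j, (σ j : 𝕜) * (⟪V j, y i⟫_𝕜 * ⟪x i, U j⟫_𝕜) := by
    intro i
    conv_lhs => rw [← V.sum_repr' (y i)]
    simp only [map_sum, map_smul, hT, inner_sum, inner_smul_right]
    exact sum_congr rfl fun j _ => by ring
  have hterm : ∀ i j, ‖(σ j : 𝕜) * (⟪V j, y i⟫_𝕜 * ⟪x i, U j⟫_𝕜)‖ ≤
      σ j * ((‖⟪V j, y i⟫_𝕜‖ ^ 2 + ‖⟪U j, x i⟫_𝕜‖ ^ 2) / 2) := by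
    intro i j
    rw [norm_mul, norm_mul, RCLike.norm_ofReal, abs_of_nonneg (hσ j), norm_inner_symm (x i)]
    have := sq_nonneg (‖⟪V j, y i⟫_𝕜‖ - ‖⟪U j, x i⟫_𝕜‖)
    have := hσ j
    nlinarith
  calc ‖∑ i, ⟪x i, T (y i)⟫_𝕜‖
      ≤ ∑ i, ∑ j, σ j * ((‖⟪V j, y i⟫_𝕜‖ ^ 2 + ‖⟪U j, x i⟫_𝕜‖ ^ 2) / 2) := by
        simp only [hexpand]
        exact (norm_sum_le _ _).trans <| sum_le_sum fun i _ =>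
          (norm_sum_le _ _).trans <| sum_le_sum fun j _ => hterm i j
    _ = _ := by
        rw [sum_comm]
        simp only [← mul_sum, ← sum_div, sum_add_distrib]

theorem norm_sum_inner_apply_le_sum_of_threshold {ι κ : Type*} [Fintype ι] [Fintype κ]
    (T : E →ₗ[𝕜] F) (V : OrthonormalBasis ι 𝕜 E) {U : ι → F} (hU : Orthonormal 𝕜 U)
    {σ : ι → ℝ} (hσ : ∀ j, 0 ≤ σ j) (hT : ∀ j, T (V j) = (σ j : 𝕜) • U j)
    (s : Finset ι) {c : ℝ} (hc : 0 ≤ c) (hs : ∀ j ∈ s, c ≤ σ j) (hsc : ∀ j ∉ s, σ j ≤ c)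
    {x : κ → F} {y : κ → E} (hx : Orthonormal 𝕜 x) (hy : Orthonormal 𝕜 y)
    (hκ : Fintype.card κ ≤ #s) :
    ‖∑ i, ⟪x i, T (y i)⟫_𝕜‖ ≤ ∑ j ∈ s, σ j := by
  refine (norm_sum_inner_apply_le T V U hσ hT x y).trans <|
    sum_mul_le_sum_of_threshold σ _ s hc hs hsc (fun j => by positivity) (fun j => ?_) ?_
  · linarith [hy.sum_sq_norm_inner_le_one (V.orthonormal.1 j),
      hx.sum_sq_norm_inner_le_one (hU.1 j)]
  · rw [← sum_div, sum_add_distrib]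
    have : (Fintype.card κ : ℝ) ≤ #s := by exact_mod_cast hκ
    linarith [V.orthonormal.sum_sum_sq_norm_inner_le_card hy, hU.sum_sum_sq_norm_inner_le_card hx]

end InnerProductSpace

section Matrix

variable {n : ℕ}

noncomputable def sqrtEigenvalues (A : Matrix (Fin n) (Fin n) ℂ) : Fin n → ℝ :=
  fun i => √((isHermitian_conjTranspose_mul_self A).eigenvalues i)

-- `sval A k = sqrtEigenvalues A (svalPerm A k)` holds definitionally.
noncomputable def svalPerm (A : Matrix (Fin n) (Fin n) ℂ) : Equiv.Perm (Fin n) :=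
  Fin.revPerm.trans (Tuple.sort (sqrtEigenvalues A))

theorem sval_nonneg (A : Matrix (Fin n) (Fin n) ℂ) (k : Fin n) : 0 ≤ sval A k :=
  Real.sqrt_nonneg _

theorem sval_antitone (A : Matrix (Fin n) (Fin n) ℂ) : Antitone (sval A) :=
  fun _ _ hij => Tuple.monotone_sort (sqrtEigenvalues A) (Fin.rev_le_rev.mpr hij)

theorem sval_sq (A : Matrix (Fin n) (Fin n) ℂ) (k : Fin n) :
    sval A k ^ 2 = (isHermitian_conjTranspose_mul_self A).eigenvalues (svalPerm A k) :=
  Real.sq_sqrt (eigenvalues_conjTranspose_mul_self_nonneg A _)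

theorem sum_sval_sq (A : Matrix (Fin n) (Fin n) ℂ) :
    ∑ k, sval A k ^ 2 = (Aᴴ * A).trace.re := by
  simp [sval_sq, Equiv.sum_comp,
    (isHermitian_conjTranspose_mul_self A).trace_eq_sum_eigenvalues, Complex.re_sum]

theorem inner_toEuclideanCLM_toEuclideanCLM (A : Matrix (Fin n) (Fin n) ℂ)
    (x y : EuclideanSpace ℂ (Fin n)) :
    ⟪toEuclideanCLM (𝕜 := ℂ) A x, toEuclideanCLM (𝕜 := ℂ) A y⟫_ℂ =
      ⟪x, toEuclideanCLM (𝕜 := ℂ) (Aᴴ * A) y⟫_ℂ := by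
  rw [map_mul, ← star_eq_conjTranspose, map_star, ContinuousLinearMap.star_eq_adjoint]
  exact (ContinuousLinearMap.adjoint_inner_right _ _ _).symm

theorem exists_svd (A : Matrix (Fin n) (Fin n) ℂ) :
    ∃ U V : OrthonormalBasis (Fin n) ℂ (EuclideanSpace ℂ (Fin n)),
      ∀ k, toEuclideanCLM (𝕜 := ℂ) A (V k) = (sval A k : ℂ) • U k := by
  let V := (isHermitian_conjTranspose_mul_self A).eigenvectorBasis.reindex (svalPerm A).symm
  have hV : ∀ j k, ⟪toEuclideanCLM (𝕜 := ℂ) A (V j), toEuclideanCLM (𝕜 := ℂ) A (V k)⟫_ℂ =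
      (sval A k ^ 2 : ℝ) * ⟪V j, V k⟫_ℂ := by
    intro j k
    have hw := (isHermitian_conjTranspose_mul_self A).mulVec_eigenvectorBasis (svalPerm A k)
    have hgram : toEuclideanCLM (𝕜 := ℂ) (Aᴴ * A) (V k) = ((sval A k ^ 2 : ℝ) : ℂ) • V k := by
      rw [sval_sq]
      apply WithLp.ofLp_injective
      simpa [V, Complex.real_smul] using hw
    rw [inner_toEuclideanCLM_toEuclideanCLM, hgram, inner_smul_right]
  have hcard : finrank ℂ (EuclideanSpace ℂ (Fin n)) = Fintype.card (Fin n) :=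
    finrank_euclideanSpace
  obtain ⟨U, hU⟩ := exists_orthonormalBasis_norm_smul_eq
    (f := fun k => toEuclideanCLM (𝕜 := ℂ) A (V k)) hcard fun j k hjk => by
      simp only [hV, V.orthonormal.2 hjk, mul_zero]
  refine ⟨U, V, fun k => ?_⟩
  have hnorm : ‖toEuclideanCLM (𝕜 := ℂ) A (V k)‖ = sval A k := by
    rw [norm_eq_sqrt_re_inner (𝕜 := ℂ), hV]
    simp [inner_self_eq_norm_sq_to_K, V.orthonormal.1 k, -Complex.ofReal_pow,
      Real.sqrt_sq (sval_nonneg A k)]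
  rw [← hnorm]
  exact hU k

noncomputable def kyFan (A : Matrix (Fin n) (Fin n) ℂ) (k : Fin n) : ℝ :=
  ∑ i ∈ Iic k, sval A i

theorem kyFan_eq_sum_Iio_add (A : Matrix (Fin n) (Fin n) ℂ) (k : Fin n) :
    kyFan A k = ∑ j ∈ Iio k, sval A j + sval A k := by
  rw [kyFan, ← Iio_insert, sum_insert (by simp), add_comm]

theorem norm_sum_inner_le_kyFan (A : Matrix (Fin n) (Fin n) ℂ) (k : Fin n)
    {x y : Iic k → EuclideanSpace ℂ (Fin n)} (hx : Orthonormal ℂ x) (hy : Orthonormal ℂ y) :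
    ‖∑ i, ⟪x i, toEuclideanCLM (𝕜 := ℂ) A (y i)⟫_ℂ‖ ≤ kyFan A k := by
  obtain ⟨U, V, hAV⟩ := exists_svd A
  exact norm_sum_inner_apply_le_sum_of_threshold (toEuclideanCLM (𝕜 := ℂ) A).toLinearMap V
    U.orthonormal (sval_nonneg A) hAV (Iic k) (sval_nonneg A k)
    (fun j hj => sval_antitone A (mem_Iic.mp hj))
    (fun j hj => sval_antitone A (not_le.mp (mem_Iic.not.mp hj)).le) hx hy
    (Fintype.card_coe _).le

theorem exists_sum_inner_eq_kyFan (A : Matrix (Fin n) (Fin n) ℂ) (k : Fin n) :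
    ∃ x y : Iic k → EuclideanSpace ℂ (Fin n), Orthonormal ℂ x ∧ Orthonormal ℂ y ∧
      ∑ i, ⟪x i, toEuclideanCLM (𝕜 := ℂ) A (y i)⟫_ℂ = kyFan A k := by
  obtain ⟨U, V, hAV⟩ := exists_svd A
  refine ⟨fun i => U i, fun i => V i, U.orthonormal.comp _ Subtype.val_injective,
    V.orthonormal.comp _ Subtype.val_injective, ?_⟩
  rw [kyFan, Complex.ofReal_sum, ← sum_coe_sort (Iic k)]
  refine sum_congr rfl fun i _ => ?_
  simp [hAV, inner_self_eq_norm_sq_to_K]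

theorem frobNorm_eq_norm_vec (A : Matrix (Fin n) (Fin n) ℂ) :
    frobNorm A = ‖WithLp.toLp 2 A.vec‖ := by
  rw [frobNorm, norm_eq_sqrt_re_inner (𝕜 := ℂ), EuclideanSpace.inner_eq_star_dotProduct,
    dotProduct_comm, star_vec_dotProduct_vec]
  rfl

end Matrix

section Analytic

variable {n : ℕ} {Ω : Set ℂ} {F : ℂ → Matrix (Fin n) (Fin n) ℂ} {z₀ : ℂ}

theorem differentiableOn_sum_inner_toEuclideanCLM (hF : DifferentiableOn ℂ F Ω) {ι : Type*}
    [Fintype ι] (x y : ι → EuclideanSpace ℂ (Fin n)) :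
    DifferentiableOn ℂ (fun z => ∑ i, ⟪x i, toEuclideanCLM (𝕜 := ℂ) (F z) (y i)⟫_ℂ) Ω := by
  let L := LinearMap.toContinuousLinearMap
    (toEuclideanCLM (n := Fin n) (𝕜 := ℂ)).toAlgEquiv.toLinearMap
  change DifferentiableOn ℂ (fun z => ∑ i, innerSL ℂ (x i) (L (F z) (y i))) Ω
  fun_prop

theorem kyFan_eq_of_isMaxOn (hΩ : IsOpen Ω) (hconn : IsPreconnected Ω)
    (hF : DifferentiableOn ℂ F Ω) (hz₀ : z₀ ∈ Ω) (k : Fin n)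
    (hmax : IsMaxOn (fun z => kyFan (F z) k) Ω z₀) :
    ∀ z ∈ Ω, kyFan (F z) k = kyFan (F z₀) k := by
  obtain ⟨x, y, hx, hy, hxy⟩ := exists_sum_inner_eq_kyFan (F z₀) k
  set g := fun z => ∑ i, ⟪x i, toEuclideanCLM (𝕜 := ℂ) (F z) (y i)⟫_ℂ
  have hg_le : ∀ z, ‖g z‖ ≤ kyFan (F z) k := fun z => norm_sum_inner_le_kyFan (F z) k hx hy
  have hg_z₀ : ‖g z₀‖ = kyFan (F z₀) k := by
    rw [show g z₀ = _ from hxy, Complex.norm_real, Real.norm_of_nonneg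
      (show 0 ≤ kyFan (F z₀) k from sum_nonneg fun i _ => sval_nonneg _ i)]
  have hg_max : IsMaxOn (norm ∘ g) Ω z₀ := fun z hz => by
    simpa [hg_z₀] using (hg_le z).trans (hmax hz)
  have hg_const := Complex.norm_eqOn_of_isPreconnected_of_isMaxOn hconn hΩ
    (differentiableOn_sum_inner_toEuclideanCLM hF x y) hz₀ hg_max
  intro z hz
  have hg_z : ‖g z‖ = ‖g z₀‖ := hg_const hz
  linarith [isMaxOn_iff.mp hmax z hz, hg_le z]

theorem sval_eq_of_forall_exists_isMaxOn (hΩ : IsOpen Ω) (hconn : IsPreconnected Ω)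
    (hF : DifferentiableOn ℂ F Ω) (hmax : ∀ k, ∃ zₖ ∈ Ω, IsMaxOn (fun z => sval (F z) k) Ω zₖ)
    (k : Fin n) : ∀ z ∈ Ω, ∀ w ∈ Ω, sval (F z) k = sval (F w) k := by
  induction k using WellFoundedLT.induction with
  | _ k ih =>
  obtain ⟨zₖ, hzₖ, hk⟩ := hmax k
  have hlower : ∀ z ∈ Ω, ∑ j ∈ Iio k, sval (F z) j = ∑ j ∈ Iio k, sval (F zₖ) j :=
    fun z hz => sum_congr rfl fun j hj => ih j (mem_Iio.mp hj) z hz zₖ hzₖ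
  have hkyFan := kyFan_eq_of_isMaxOn hΩ hconn hF hzₖ k <| isMaxOn_iff.mpr fun z hz => by
    rw [kyFan_eq_sum_Iio_add, kyFan_eq_sum_Iio_add, hlower z hz]
    linarith [isMaxOn_iff.mp hk z hz]
  have hk_const : ∀ z ∈ Ω, sval (F z) k = sval (F zₖ) k := fun z hz => by
    have hz_eq := hkyFan z hz
    rw [kyFan_eq_sum_Iio_add, kyFan_eq_sum_Iio_add, hlower z hz] at hz_eq
    linarith
  exact fun z hz w hw => (hk_const z hz).trans (hk_const w hw).symm

theorem eq_of_isMaxOn_frobNorm (hΩ : IsOpen Ω) (hconn : IsPreconnected Ω)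
    (hF : DifferentiableOn ℂ F Ω) (hz₀ : z₀ ∈ Ω)
    (hmax : IsMaxOn (fun z => frobNorm (F z)) Ω z₀) : ∀ z ∈ Ω, F z = F z₀ := by
  let L : Matrix (Fin n) (Fin n) ℂ →ₗ[ℂ] EuclideanSpace ℂ (Fin n × Fin n) :=
    { toFun := fun A => WithLp.toLp 2 A.vec
      map_add' := fun _ _ => rfl
      map_smul' := fun _ _ => rfl }
  have hL := Complex.eqOn_of_isPreconnected_of_isMaxOn_norm hconn hΩ
    (L.toContinuousLinearMap.differentiable.comp_differentiableOn hF) hz₀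
    fun z hz => show ‖WithLp.toLp 2 (F z).vec‖ ≤ ‖WithLp.toLp 2 (F z₀).vec‖ by
      simpa [frobNorm_eq_norm_vec] using hmax hz
  exact fun z hz => vec_inj.mp (congrArg WithLp.ofLp (hL hz))

end Analytic

/-- For an analytic `F` on a region `Ω`, the following are equivalent:
(1) `F` is constant on `Ω`;
(2) every singular value function `z ↦ s_k(F z)` is constant on `Ω`;
(3) every singular value function `z ↦ s_k(F z)` attains its maximum at some point of `Ω`;
(4) the Frobenius norm `z ↦ ‖F z‖_F` is constant on `Ω`;
(5) the Frobenius norm `z ↦ ‖F z‖_F` attains its maximum at some `z₀ ∈ Ω`. -/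
theorem constant_tfae {n : ℕ} (Ω : Set ℂ) (hΩ : IsOpen Ω) (hconn : IsConnected Ω)
    (F : ℂ → Matrix (Fin n) (Fin n) ℂ) (hF : ∀ z ∈ Ω, DifferentiableAt ℂ F z) :
    [(∀ z ∈ Ω, ∀ w ∈ Ω, F z = F w),
     (∀ k : Fin n, ∀ z ∈ Ω, ∀ w ∈ Ω, sval (F z) k = sval (F w) k),
     (∀ k : Fin n, ∃ zk ∈ Ω, ∀ z ∈ Ω, sval (F z) k ≤ sval (F zk) k),
     (∀ z ∈ Ω, ∀ w ∈ Ω, frobNorm (F z) = frobNorm (F w)),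
     (∃ z₀ ∈ Ω, ∀ z ∈ Ω, frobNorm (F z) ≤ frobNorm (F z₀))].TFAE := by
  have hFΩ : DifferentiableOn ℂ F Ω := fun z hz => (hF z hz).differentiableWithinAt
  obtain ⟨z₀, hz₀⟩ := hconn.nonempty
  tfae_have 1 → 2 := fun h k z hz w hw => by rw [h z hz w hw]
  tfae_have 2 → 3 := fun h k => ⟨z₀, hz₀, fun z hz => (h k z hz z₀ hz₀).le⟩
  tfae_have 3 → 2 := sval_eq_of_forall_exists_isMaxOn hΩ hconn.isPreconnected hFΩ
  tfae_have 2 → 4 := fun h z hz w hw => by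
    simp only [frobNorm, ← sum_sval_sq, h _ z hz w hw]
  tfae_have 4 → 5 := fun h => ⟨z₀, hz₀, fun z hz => (h z hz z₀ hz₀).le⟩
  tfae_have 5 → 1 := fun ⟨c, hc, hmax⟩ z hz w hw => by
    have hconst := eq_of_isMaxOn_frobNorm hΩ hconn.isPreconnected hFΩ hc hmax
    rw [hconst z hz, hconst w hw]
  tfae_finish
end

section
/- Let Ω be a region (nonempty open connected subset) of ℂ and let F : Ω → M_n(ℂ) be a nonconstant analytic function. If every function z ↦ s_k(F(z)), 1 ≤ k ≤ n, attains its minimum value over Ω at a common point z₀ ∈ Ω, then det(F(z₀)) = 0. -/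
/-!
If `det (F z₀) ≠ 0`, then `s_k (F z) ≥ s_k (F z₀) > 0` for all `k` and `z ∈ Ω`, so `F` is
invertible on `Ω` and `z ↦ (F z)⁻¹` is holomorphic there. The squared Frobenius norm of `(F z)⁻¹`
is `∑ₖ s_k (F z)⁻²`, which is largest at `z₀`. The Frobenius norm is a Euclidean norm, hence
strictly convex, so the maximum modulus principle makes `F⁻¹`, and with it `F`, constant on `Ω`.
-/

open scoped Matrix

attribute [local instance] Matrix.normedAddCommGroup Matrix.normedSpace

theorem map_ringInverse {M N F : Type*} [MonoidWithZero M] [MonoidWithZero N]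
    [EquivLike F M N] [MulEquivClass F M N] (e : F) (a : M) :
    e (Ring.inverse a) = Ring.inverse (e a) := by
  by_cases ha : IsUnit a
  · obtain ⟨u, rfl⟩ := ha
    rw [Ring.inverse_unit]
    exact (Ring.inverse_unit (Units.map (e : M →* N) u)).symm
  · rw [Ring.inverse_non_unit _ ha, Ring.inverse_non_unit _ (mt (MulEquiv.isUnit_map e).1 ha),
      map_zero]

namespace Matrix

variable {𝕜 m n : Type*} [RCLike 𝕜] [Fintype m] [Fintype n]

theorem IsHermitian.trace_inv [DecidableEq n] {A : Matrix n n 𝕜} (hA : A.IsHermitian)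
    (hu : IsUnit A) : A⁻¹.trace = ∑ i, (((hA.eigenvalues i)⁻¹ : ℝ) : 𝕜) := by
  rw [nonsing_inv_eq_ringInverse, ← cfc_ringInverse_id (R := ℝ) A hu hA.isSelfAdjoint,
    hA.cfc_eq, IsHermitian.cfc, Unitary.conjStarAlgAut_apply, trace_mul_cycle,
    Unitary.coe_star_mul_self, one_mul, trace_diagonal]
  rfl

open scoped ComplexOrder in
theorem isUnit_iff_eigenvalues_conjTranspose_mul_self_pos [DecidableEq n] (A : Matrix n n 𝕜) :
    IsUnit A ↔ ∀ i, 0 < (isHermitian_conjTranspose_mul_self A).eigenvalues i := by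
  rw [← IsHermitian.posDef_iff_eigenvalues_pos,
    (posSemidef_conjTranspose_mul_self A).posDef_iff_isUnit, isUnit_iff_isUnit_det,
    isUnit_iff_isUnit_det, det_mul, det_conjTranspose, IsUnit.mul_iff, isUnit_star, and_self]

theorem re_trace_conjTranspose_inv_mul_inv [DecidableEq n] {A : Matrix n n 𝕜} (hA : IsUnit A) :
    RCLike.re ((A⁻¹)ᴴ * A⁻¹).trace =
      ∑ i, ((isHermitian_conjTranspose_mul_self A).eigenvalues i)⁻¹ := by
  rw [trace_mul_comm, conjTranspose_nonsing_inv, ← mul_inv_rev,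
    (isHermitian_conjTranspose_mul_self A).trace_inv (hA.star.mul hA), map_sum]
  simp only [RCLike.ofReal_re]

variable (𝕜 m n) in
noncomputable def vecCLM : Matrix m n 𝕜 →L[𝕜] EuclideanSpace 𝕜 (n × m) :=
  LinearMap.toContinuousLinearMap
    { toFun := fun A => WithLp.toLp 2 A.vec
      map_add' := fun A B => by rw [vec_add, WithLp.toLp_add]
      map_smul' := fun c A => by rw [vec_smul, WithLp.toLp_smul]; rfl }

theorem vecCLM_injective : Function.Injective (vecCLM 𝕜 m n) :=
  fun _ _ h => vec_inj.1 (WithLp.toLp_injective 2 h)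

theorem norm_vecCLM_sq (A : Matrix m n 𝕜) :
    ‖vecCLM 𝕜 m n A‖ ^ 2 = RCLike.re (Aᴴ * A).trace := by
  rw [← star_vec_dotProduct_vec, ← inner_self_eq_norm_sq (𝕜 := 𝕜),
    EuclideanSpace.inner_eq_star_dotProduct, dotProduct_comm]
  rfl

/- The sup norm on matrices is not a ring norm, so `Ring.inverse` is differentiated in the
Banach algebra of operators on `EuclideanSpace 𝕜 n` and transported back along
`toEuclideanCLM`. -/
theorem _root_.DifferentiableAt.matrix_inv [DecidableEq n] {E : Type*} [NormedAddCommGroup E]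
    [NormedSpace 𝕜 E] {f : E → Matrix n n 𝕜} {x : E} (hf : DifferentiableAt 𝕜 f x)
    (hx : IsUnit (f x)) : DifferentiableAt 𝕜 (fun y => (f y)⁻¹) x := by
  let φ := toEuclideanCLM (𝕜 := 𝕜) (n := n)
  let L := φ.toAlgEquiv.toLinearEquiv.toContinuousLinearEquiv
  have hinv (A : Matrix n n 𝕜) : A⁻¹ = L.symm (Ring.inverse (L A)) := by
    change A⁻¹ = φ.symm (Ring.inverse (φ A))
    rw [← map_ringInverse, StarAlgEquiv.symm_apply_apply, nonsing_inv_eq_ringInverse]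
  simp only [hinv]
  exact L.symm.differentiableAt.comp x
    ((L.differentiableAt.comp x hf).inverse ((MulEquiv.isUnit_map φ).2 hx))

end Matrix

theorem exists_perm_sval_eq {n : ℕ} (A : Matrix (Fin n) (Fin n) ℂ) :
    ∃ σ : Equiv.Perm (Fin n), ∀ k,
      sval A k = √((Matrix.isHermitian_conjTranspose_mul_self A).eigenvalues (σ k)) :=
  ⟨Fin.revPerm.trans (Tuple.sort _), fun _ => rfl⟩

theorem sval_pos_iff {n : ℕ} (A : Matrix (Fin n) (Fin n) ℂ) :
    (∀ k, 0 < sval A k) ↔ IsUnit A := by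
  obtain ⟨σ, hσ⟩ := exists_perm_sval_eq A
  simp only [hσ, Real.sqrt_pos]
  rw [Matrix.isUnit_iff_eigenvalues_conjTranspose_mul_self_pos]
  exact σ.forall_congr_right
    (q := fun i => 0 < (Matrix.isHermitian_conjTranspose_mul_self A).eigenvalues i)

theorem sum_inv_sval_sq {n : ℕ} {A : Matrix (Fin n) (Fin n) ℂ} (hA : IsUnit A) :
    ∑ k, (sval A k ^ 2)⁻¹ = ‖Matrix.vecCLM ℂ (Fin n) (Fin n) A⁻¹‖ ^ 2 := by
  obtain ⟨σ, hσ⟩ := exists_perm_sval_eq A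
  have hpos := (Matrix.isUnit_iff_eigenvalues_conjTranspose_mul_self_pos A).1 hA
  simp only [hσ, Real.sq_sqrt (hpos _).le]
  rw [Matrix.norm_vecCLM_sq, Matrix.re_trace_conjTranspose_inv_mul_inv hA]
  exact Equiv.sum_comp σ fun i => ((Matrix.isHermitian_conjTranspose_mul_self A).eigenvalues i)⁻¹

/-- If `F` is a nonconstant analytic function on a region `Ω` and every singular value function
`z ↦ s_k(F z)` attains its minimum over `Ω` at a common point `z₀ ∈ Ω`, then
`det (F z₀) = 0`. -/
theorem det_eq_zero_of_min_singular_values {n : ℕ} (Ω : Set ℂ) (hΩ : IsOpen Ω)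
    (hconn : IsConnected Ω) (F : ℂ → Matrix (Fin n) (Fin n) ℂ)
    (hF : ∀ z ∈ Ω, DifferentiableAt ℂ F z)
    (hnc : ¬ ∀ z ∈ Ω, ∀ w ∈ Ω, F z = F w)
    (z₀ : ℂ) (hz₀ : z₀ ∈ Ω)
    (hmin : ∀ k : Fin n, ∀ z ∈ Ω, sval (F z₀) k ≤ sval (F z) k) :
    (F z₀).det = 0 := by
  by_contra hdet
  have hpos₀ := (sval_pos_iff _).2 ((F z₀).isUnit_iff_isUnit_det.2 (Ne.isUnit hdet))
  have hunit (z : ℂ) (hz : z ∈ Ω) : IsUnit (F z) :=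
    (sval_pos_iff _).1 fun k => (hpos₀ k).trans_le (hmin k z hz)
  set G := fun z => Matrix.vecCLM ℂ (Fin n) (Fin n) (F z)⁻¹
  have hG : DifferentiableOn ℂ G Ω := fun z hz =>
    ((Matrix.vecCLM ℂ _ _).differentiableAt.comp z
      ((hF z hz).matrix_inv (hunit z hz))).differentiableWithinAt
  have hmax : IsMaxOn (norm ∘ G) Ω z₀ := fun z hz => by
    change ‖G z‖ ≤ ‖G z₀‖
    rw [← sq_le_sq₀ (norm_nonneg _) (norm_nonneg _), ← sum_inv_sval_sq (hunit z hz),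
      ← sum_inv_sval_sq (hunit z₀ hz₀)]
    exact Finset.sum_le_sum fun k _ =>
      inv_anti₀ (pow_pos (hpos₀ k) 2) (pow_le_pow_left₀ (hpos₀ k).le (hmin k z hz) 2)
  have hGconst := Complex.eqOn_of_isPreconnected_of_isMaxOn_norm hconn.isPreconnected hΩ hG
    hz₀ hmax
  have hFconst (z : ℂ) (hz : z ∈ Ω) : F z = F z₀ :=
    Matrix.inv_inj (Matrix.vecCLM_injective (hGconst hz))
      ((F z).isUnit_iff_isUnit_det.1 (hunit z hz))
  exact hnc fun z hz w hw => (hFconst z hz).trans (hFconst w hw).symm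
end
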